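/- Let H be a closed subspace of a complex Hilbert space L, let T = (T_1, …, T_n) be bounded operators on H and R = (R_1, …, R_n) bounded operators on L such that R_i^* u = T_i^* u for all u ∈ H and all i (i.e., R is a dilation of T), and let q_{ij} (1 ≤ i < j ≤ n) be complex numbers. Then H^q(T) = L^q(R) ∩ H, and the maximal q-commuting piece R^q of R is a dilation of the maximal q-commuting piece T^q of T, i.e., for every u ∈ H^q(T) and every i, (P_{L^q(R)} R_i |_{L^q(R)})^* u = (P_{H^q(T)} T_i |_{H^q(T)})^* u. -/

import Mathlib

/-!
A dilation intertwines the adjoints: `R_i^* u = T_i^* u` on `H` propagates to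
`(R^α)^* u = (T^α)^* u` for every word `α`, so the equations cutting out `L^q(R)` and `H^q(T)`
agree on `H`. Since a maximal `q`-commuting piece is invariant under every `R_i^*`, the adjoint of
the compression `P R_i |` is just the restriction of `R_i^*`, and the dilation property of the
compressions is the original one.
-/

/-- The maximal `q`-commuting piece of a tuple `R` on `M`, as a submodule:
`{ h : (conj(q_{ij}) R_j^* R_i^* − R_i^* R_j^*)(R^α)^* h = 0 for all i < j, α ∈ Λ̃ }`. -/
noncomputable def qPieceSub {M : Type*} [NormedAddCommGroup M] [InnerProductSpace ℂ M]
    [CompleteSpace M] {n : ℕ} (R : Fin n → M →L[ℂ] M) (q : Fin n → Fin n → ℂ) :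
    Submodule ℂ M :=
  ⨅ (i : Fin n) (j : Fin n) (_ : i < j) (α : List (Fin n)),
    LinearMap.ker
      (((((starRingEnd ℂ (q i j)) •
            (ContinuousLinearMap.adjoint (R j) * ContinuousLinearMap.adjoint (R i))
          - ContinuousLinearMap.adjoint (R i) * ContinuousLinearMap.adjoint (R j)) *
          ContinuousLinearMap.adjoint ((α.map R).prod) : M →L[ℂ] M) : M →ₗ[ℂ] M))

theorem qPieceSub_isClosed {M : Type*} [NormedAddCommGroup M] [InnerProductSpace ℂ M]
    [CompleteSpace M] {n : ℕ} (R : Fin n → M →L[ℂ] M) (q : Fin n → Fin n → ℂ) :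
    IsClosed ((qPieceSub R q : Submodule ℂ M) : Set M) := by
  rw [qPieceSub]
  simp only [Submodule.coe_iInf]
  exact isClosed_iInter fun i => isClosed_iInter fun j => isClosed_iInter fun _ =>
    isClosed_iInter fun α => ContinuousLinearMap.isClosed_ker _

/-- The compression of `R i` to the maximal `q`-commuting piece,
`R_i^q = P_{M^q(R)} R_i |_{M^q(R)}`. -/
noncomputable def compressQ {M : Type*} [NormedAddCommGroup M] [InnerProductSpace ℂ M]
    [CompleteSpace M] {n : ℕ} (R : Fin n → M →L[ℂ] M) (q : Fin n → Fin n → ℂ) (i : Fin n) :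
    ↥(qPieceSub R q) →L[ℂ] ↥(qPieceSub R q) :=
  haveI : CompleteSpace ↥(qPieceSub R q) := (qPieceSub_isClosed R q).completeSpace_coe
  (Submodule.orthogonalProjectionOnto (qPieceSub R q)).comp ((R i).comp (qPieceSub R q).subtypeL)

open ContinuousLinearMap

section QPiece

variable {M : Type*} [NormedAddCommGroup M] [InnerProductSpace ℂ M] [CompleteSpace M] {n : ℕ}
  (R : Fin n → M →L[ℂ] M) (q : Fin n → Fin n → ℂ)

noncomputable def qDefect (i j : Fin n) (α : List (Fin n)) : M →L[ℂ] M :=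
  (starRingEnd ℂ (q i j) • (adjoint (R j) * adjoint (R i)) - adjoint (R i) * adjoint (R j)) *
    adjoint (α.map R).prod

lemma mem_qPieceSub_iff {v : M} :
    v ∈ qPieceSub R q ↔ ∀ i j, i < j → ∀ α, qDefect R q i j α v = 0 := by
  simp only [qPieceSub, qDefect, Submodule.mem_iInf, LinearMap.mem_ker, coe_coe]

variable {R q} in
lemma adjoint_apply_mem_qPieceSub {v : M} (hv : v ∈ qPieceSub R q) (i : Fin n) :
    adjoint (R i) v ∈ qPieceSub R q := by
  rw [mem_qPieceSub_iff] at hv ⊢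
  intro j k hjk α
  simpa [qDefect, mul_def, adjoint_comp] using hv j k hjk (i :: α)

lemma coe_adjoint_compressQ_apply (i : Fin n) (v : qPieceSub R q) :
    haveI : CompleteSpace (qPieceSub R q) := (qPieceSub_isClosed R q).completeSpace_coe
    (adjoint (compressQ R q i) v : M) = adjoint (R i) v := by
  have : CompleteSpace (qPieceSub R q) := (qPieceSub_isClosed R q).completeSpace_coe
  rw [compressQ, adjoint_comp, adjoint_comp, Submodule.adjoint_subtypeL,
    Submodule.adjoint_orthogonalProjectionOnto]
  exact congrArg Subtype.val (Submodule.orthogonalProjectionOnto_mem_subspace_eq_self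
    (⟨_, adjoint_apply_mem_qPieceSub v.2 i⟩ : qPieceSub R q))

end QPiece

section Dilation

variable {L : Type*} [NormedAddCommGroup L] [InnerProductSpace ℂ L] [CompleteSpace L]
  {H : Submodule ℂ L} [CompleteSpace H] {n : ℕ} {T : Fin n → H →L[ℂ] H} {R : Fin n → L →L[ℂ] L}

lemma adjoint_list_prod_apply_of_dilation
    (hdil : ∀ (i : Fin n) (u : H), adjoint (R i) u = adjoint (T i) u) :
    ∀ (α : List (Fin n)) (u : H), adjoint (α.map R).prod u = adjoint (α.map T).prod u
  | [], u => by simp [one_def, adjoint_id]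
  | a :: α, u => by
    simp only [List.map_cons, List.prod_cons, mul_def, adjoint_comp, comp_apply]
    rw [hdil, adjoint_list_prod_apply_of_dilation hdil α]

lemma qDefect_apply_of_dilation
    (hdil : ∀ (i : Fin n) (u : H), adjoint (R i) u = adjoint (T i) u)
    (q : Fin n → Fin n → ℂ) (i j : Fin n) (α : List (Fin n)) (u : H) :
    qDefect R q i j α u = qDefect T q i j α u := by
  simp only [qDefect, mul_def, comp_apply, _root_.sub_apply, _root_.smul_apply,
    Submodule.coe_sub, Submodule.coe_smul]
  rw [adjoint_list_prod_apply_of_dilation hdil, hdil, hdil, hdil, hdil]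

lemma qPieceSub_eq_comap_of_dilation
    (hdil : ∀ (i : Fin n) (u : H), adjoint (R i) u = adjoint (T i) u) (q : Fin n → Fin n → ℂ) :
    qPieceSub T q = (qPieceSub R q).comap H.subtype := by
  ext u
  simp only [Submodule.mem_comap, Submodule.subtype_apply, mem_qPieceSub_iff,
    qDefect_apply_of_dilation hdil, ZeroMemClass.coe_eq_zero]

end Dilation

/-- If `R` on `L` is a dilation of `T` on the closed subspace `H ⊆ L`, then
`H^q(T) = L^q(R) ∩ H`, and the maximal `q`-commuting piece `R^q` is a dilation of `T^q`. -/
theorem stmt3 {L : Type*} [NormedAddCommGroup L] [InnerProductSpace ℂ L] [CompleteSpace L]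
    (H : Submodule ℂ L) [CompleteSpace ↥H]
    {n : ℕ} (T : Fin n → ↥H →L[ℂ] ↥H) (R : Fin n → L →L[ℂ] L) (q : Fin n → Fin n → ℂ)
    (hdil : ∀ (i : Fin n) (u : ↥H),
      ContinuousLinearMap.adjoint (R i) ↑u = ↑(ContinuousLinearMap.adjoint (T i) u)) :
    haveI : CompleteSpace ↥(qPieceSub R q) := (qPieceSub_isClosed R q).completeSpace_coe
    haveI : CompleteSpace ↥(qPieceSub T q) := (qPieceSub_isClosed T q).completeSpace_coe
    -- `H^q(T) = L^q(R) ∩ H`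
    ((qPieceSub T q : Set ↥H) = Subtype.val ⁻¹' (qPieceSub R q : Set L)) ∧
    -- `R^q` is a dilation of `T^q`
    (∀ (i : Fin n) (u : ↥H) (huT : u ∈ qPieceSub T q) (huR : (u : L) ∈ qPieceSub R q),
      ((ContinuousLinearMap.adjoint (compressQ R q i) ⟨(u : L), huR⟩ : ↥(qPieceSub R q)) : L)
        = ((ContinuousLinearMap.adjoint (compressQ T q i) ⟨u, huT⟩ : ↥(qPieceSub T q)) : ↥H)) := by
  refine ⟨by rw [qPieceSub_eq_comap_of_dilation hdil q]; rfl, fun i u huT huR => ?_⟩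
  rw [coe_adjoint_compressQ_apply, coe_adjoint_compressQ_apply]
  exact hdil i u
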